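/- Let f ∈ ℂ[x,y] be a primitive homogeneous polynomial of degree d > 1, i.e. f is not of the form g^r for any g ∈ ℂ[x,y] and any integer r > 1. Then C(f) = J_f/D_f is torsion free as a ℂ[t]-module: for every h ∈ J_f and every k ≥ 1, if f^k·h ∈ D_f then h ∈ D_f. -/

import Mathlib

open MvPolynomial

/-- Membership in `D_f = {f_x·∂g/∂y − f_y·∂g/∂x : g ∈ ℂ[x,y]}`. -/
def Dmem (f w : MvPolynomial (Fin 2) ℂ) : Prop :=
  ∃ g : MvPolynomial (Fin 2) ℂ,
    w = pderiv 0 f * pderiv 1 g - pderiv 1 f * pderiv 0 g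

/-!
Write `{f, g} = f_x g_y - f_y g_x`, so that `D_f` is the image of `{f, ·}`. As `J_f` is an ideal,
induction on `k` reduces the claim to `k = 1`: from `f h = {f, g}` and `h ∈ J_f` deduce
`h ∈ D_f`. Taking homogeneous components, we may assume `h` homogeneous of degree `m` and `g`
homogeneous of degree `e = m + 2`; since `J_f` is generated in degree `d - 1`, either `h = 0` or
`e ≥ d + 1`. It then suffices to show `f ∣ g`, for `{f, f w} = f {f, w}`.

Let `π` be a prime with `f = π^A u`, `g = π^B v`, `π ∤ u v`, and suppose `B < A`. Then
`π^(A-1)` divides `f_x`, `f_y` and hence `h`, so `π^(2A-1) ∣ f h = {f, g}`. By Euler's identity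
`x {f, g} = d f g_y - e g f_y`, which is `(dB - eA) π^(A+B-1) π_y u v` modulo `π^(A+B)`.
Since `dB < eA`, this forces `π ∣ π_y`, and symmetrically `π ∣ π_x`. But a prime cannot
divide its nonzero partial derivatives, which have lower degree, and in characteristic zero
they cannot all vanish.
-/

namespace MvPolynomial

variable {σ R : Type*}

section CommSemiring

variable [CommSemiring R]

theorem totalDegree_pderiv_lt {p : MvPolynomial σ R} {i : σ} (h : pderiv i p ≠ 0) :
    (pderiv i p).totalDegree < p.totalDegree := by
  obtain ⟨m, hm, hmax⟩ := Finset.exists_mem_eq_sup _ (support_nonempty.mpr h)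
    fun s : σ →₀ ℕ => s.sum fun _ e => e
  rw [mem_support_iff, coeff_pderiv] at hm
  have hle := le_totalDegree (mem_support_iff.mpr (left_ne_zero_of_mul hm))
  have hdeg (s : σ →₀ ℕ) : (s.sum fun _ e => e) = s.degree := rfl
  rw [totalDegree, hmax, hdeg]
  rw [hdeg, map_add, Finsupp.degree_single] at hle
  omega

theorem pow_dvd_pderiv_of_pow_succ_dvd {π p : MvPolynomial σ R} {n : ℕ} (h : π ^ (n + 1) ∣ p)
    (i : σ) : π ^ n ∣ pderiv i p := by
  obtain ⟨w, rfl⟩ := h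
  rw [pderiv_mul, pderiv_pow, Nat.add_sub_cancel, pow_succ]
  exact dvd_add ⟨(n + 1 : ℕ) • pderiv i π * w, by rw [nsmul_eq_mul]; ring⟩
    ⟨π * pderiv i w, by ring⟩

theorem pow_dvd_of_mem_span_pderiv {π f h : MvPolynomial σ R} {n : ℕ} {i j : σ}
    (hf : π ^ (n + 1) ∣ f) (hh : h ∈ Ideal.span {pderiv i f, pderiv j f}) : π ^ n ∣ h := by
  obtain ⟨a, b, rfl⟩ := Ideal.mem_span_pair.mp hh
  exact dvd_add ((pow_dvd_pderiv_of_pow_succ_dvd hf i).mul_left a)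
    ((pow_dvd_pderiv_of_pow_succ_dvd hf j).mul_left b)

theorem mul_pderiv_pow_mul (π u : MvPolynomial σ R) (n : ℕ) (i : σ) :
    π * pderiv i (π ^ n * u) = π ^ n * (n * pderiv i π * u + π * pderiv i u) := by
  rw [pderiv_mul, pderiv_pow]
  cases n with
  | zero => simp
  | succ n => simp only [Nat.add_sub_cancel]; push_cast; ring

attribute [local instance] gradedAlgebra in
theorem homogeneousComponent_mul_of_isHomogeneous {q : MvPolynomial σ R} {c : ℕ}
    (hq : q.IsHomogeneous c) (t : MvPolynomial σ R) (n : ℕ) :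
    homogeneousComponent n (q * t) = if c ≤ n then q * homogeneousComponent (n - c) t else 0 := by
  have := DirectSum.coe_decompose_mul_of_left_mem (homogeneousSubmodule σ R) n (b := t) hq
  simp only [← decomposition.decompose'_apply]
  exact this

theorem homogeneousComponent_mem_span_pderiv {f h : MvPolynomial σ R} {d : ℕ} {i j : σ}
    (hf : f.IsHomogeneous d) (hh : h ∈ Ideal.span {pderiv i f, pderiv j f}) (m : ℕ)
    (hm : homogeneousComponent m h ≠ 0) :
    d ≤ m + 1 ∧ homogeneousComponent m h ∈ Ideal.span {pderiv i f, pderiv j f} := by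
  obtain ⟨a, b, rfl⟩ := Ideal.mem_span_pair.mp hh
  rw [map_add, mul_comm a, mul_comm b, homogeneousComponent_mul_of_isHomogeneous hf.pderiv,
    homogeneousComponent_mul_of_isHomogeneous hf.pderiv] at hm ⊢
  split_ifs at hm ⊢ with hdm
  · exact ⟨by omega, Ideal.mem_span_pair.mpr
      ⟨homogeneousComponent _ a, homogeneousComponent _ b, by ring⟩⟩
  · simp at hm

end CommSemiring

theorem eq_C_of_forall_pderiv_eq_zero [CommRing R] [IsDomain R] [CharZero R]
    {p : MvPolynomial σ R} (h : ∀ i, pderiv i p = 0) : p = C (coeff 0 p) := by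
  classical
  ext m
  rw [coeff_C]
  split_ifs with hm
  · rw [hm]
  obtain ⟨i, hi⟩ := Finsupp.ne_iff.mp (Ne.symm hm)
  have hcoeff := congr(coeff (m - Finsupp.single i 1) $(h i))
  rw [coeff_pderiv, coeff_zero, tsub_add_cancel_of_le (Finsupp.single_le_iff.mpr
    (Nat.one_le_iff_ne_zero.mpr hi))] at hcoeff
  exact (mul_eq_zero.mp hcoeff).resolve_right (Nat.cast_add_one_ne_zero _)

section Field

variable {K : Type*} [Field K] [CharZero K]

theorem exists_not_dvd_pderiv_of_prime {π : MvPolynomial σ K} (hπ : Prime π) :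
    ∃ i, ¬π ∣ pderiv i π := by
  by_contra! H
  have hder (i : σ) : pderiv i π = 0 := by
    by_contra hne
    exact (totalDegree_pderiv_lt hne).not_ge (totalDegree_le_of_dvd_of_isDomain (H i) hne)
  have hC := eq_C_of_forall_pderiv_eq_zero hder
  have hc : coeff 0 π ≠ 0 := fun hc => hπ.ne_zero (by rw [hC, hc, C_0])
  exact hπ.not_isUnit (hC ▸ (Ne.isUnit hc).map C)

theorem prime_dvd_pderiv_of_pow_dvd {π u v : MvPolynomial σ K} (hπ : Prime π) (hu : ¬π ∣ u)
    (hv : ¬π ∣ v) {A B a b : ℕ} (hab : a * B ≠ b * A) (i : σ)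
    (h : π ^ (A + B + 1) ∣ π * (a • (π ^ A * u * pderiv i (π ^ B * v)) -
      b • (π ^ B * v * pderiv i (π ^ A * u)))) :
    π ∣ pderiv i π := by
  have hexpand : π * (a • (π ^ A * u * pderiv i (π ^ B * v)) -
      b • (π ^ B * v * pderiv i (π ^ A * u))) =
        π ^ (A + B) * ((a * B - b * A : MvPolynomial σ K) * (pderiv i π * (u * v)) +
          π * (a * u * pderiv i v - b * v * pderiv i u)) := by
    linear_combination (a * π ^ A * u) * mul_pderiv_pow_mul π v B i
      - (b * π ^ B * v) * mul_pderiv_pow_mul π u A i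
  rw [hexpand, pow_succ, mul_dvd_mul_iff_left (pow_ne_zero _ hπ.ne_zero),
    dvd_add_left (dvd_mul_right _ _)] at h
  have hunit : IsUnit (a * B - b * A : MvPolynomial σ K) := by
    have hC : (a * B - b * A : MvPolynomial σ K) = C (a * B - b * A : K) := by simp
    rw [hC]
    exact (Ne.isUnit (sub_ne_zero.mpr (by exact_mod_cast hab))).map C
  rcases hπ.dvd_or_dvd h with h | h
  · exact absurd (isUnit_of_dvd_unit h hunit) hπ.not_isUnit
  rcases hπ.dvd_or_dvd h with h | h
  · exact h
  rcases hπ.dvd_or_dvd h with h | h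
  · exact absurd h hu
  · exact absurd h hv

end Field

section PoissonBracket

variable [CommRing R]

noncomputable def poissonBracket (f : MvPolynomial (Fin 2) R) :
    MvPolynomial (Fin 2) R →ₗ[R] MvPolynomial (Fin 2) R :=
  LinearMap.mulLeft R (pderiv 0 f) ∘ₗ (pderiv 1).toLinearMap -
    LinearMap.mulLeft R (pderiv 1 f) ∘ₗ (pderiv 0).toLinearMap

variable {f g : MvPolynomial (Fin 2) R} {d e : ℕ}

theorem poissonBracket_apply (f g : MvPolynomial (Fin 2) R) :
    poissonBracket f g = pderiv 0 f * pderiv 1 g - pderiv 1 f * pderiv 0 g := rfl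

theorem poissonBracket_self_mul (f w : MvPolynomial (Fin 2) R) :
    poissonBracket f (f * w) = f * poissonBracket f w := by
  simp only [poissonBracket_apply, pderiv_mul]
  ring

theorem IsHomogeneous.poissonBracket (hf : f.IsHomogeneous d) (hg : g.IsHomogeneous e) :
    (poissonBracket f g).IsHomogeneous (d - 1 + (e - 1)) :=
  (hf.pderiv.mul hg.pderiv).sub (hf.pderiv.mul hg.pderiv)

theorem homogeneousComponent_poissonBracket (hd : 1 ≤ d) (hf : f.IsHomogeneous d)
    (g : MvPolynomial (Fin 2) R) (m : ℕ) :
    homogeneousComponent (m + d) (poissonBracket f g) =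
      poissonBracket f (homogeneousComponent (m + 2) g) := by
  conv_lhs => rw [← sum_homogeneousComponent g]
  rw [map_sum, map_sum]
  have hcomp (j : ℕ) := homogeneousComponent_of_mem (m := m + d)
    (hf.poissonBracket (homogeneousComponent_isHomogeneous j g))
  rw [Finset.sum_eq_single (m + 2), hcomp, if_pos (by omega)]
  · intro j _ hj
    rw [hcomp, if_neg (by omega)]
  · intro hm
    rw [homogeneousComponent_eq_zero (m + 2) g (by simpa using hm), map_zero, map_zero]

theorem X_zero_mul_poissonBracket (hf : f.IsHomogeneous d) (hg : g.IsHomogeneous e) :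
    X 0 * poissonBracket f g = d • (f * pderiv 1 g) - e • (g * pderiv 1 f) := by
  have hEf := hf.sum_X_mul_pderiv
  have hEg := hg.sum_X_mul_pderiv
  simp only [Fin.sum_univ_two] at hEf hEg
  rw [poissonBracket_apply]
  linear_combination pderiv 1 g * hEf - pderiv 1 f * hEg

theorem X_one_mul_poissonBracket (hf : f.IsHomogeneous d) (hg : g.IsHomogeneous e) :
    X 1 * poissonBracket f g = -(d • (f * pderiv 0 g) - e • (g * pderiv 0 f)) := by
  have hEf := hf.sum_X_mul_pderiv
  have hEg := hg.sum_X_mul_pderiv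
  simp only [Fin.sum_univ_two] at hEf hEg
  rw [poissonBracket_apply]
  linear_combination pderiv 0 f * hEg - pderiv 0 g * hEf

end PoissonBracket

section TorsionFree

variable {K : Type*} [Field K] [CharZero K] {f g h : MvPolynomial (Fin 2) K} {d e : ℕ}

theorem dvd_of_mul_eq_poissonBracket (hd : 1 ≤ d) (hde : d ≤ e) (hf : f.IsHomogeneous d)
    (hg : g.IsHomogeneous e) (hf0 : f ≠ 0) (hh : h ∈ Ideal.span {pderiv 0 f, pderiv 1 f})
    (heq : f * h = poissonBracket f g) : f ∣ g := by
  rcases eq_or_ne g 0 with rfl | hg0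
  · exact dvd_zero f
  rw [UniqueFactorizationMonoid.dvd_iff_emultiplicity_le hf0]
  intro π hπ
  obtain ⟨A, u, hu, rfl⟩ := WfDvdMonoid.max_power_factor' hf0 hπ.not_isUnit
  obtain ⟨B, v, hv, rfl⟩ := WfDvdMonoid.max_power_factor' hg0 hπ.not_isUnit
  simp only [emultiplicity_mul hπ, emultiplicity_pow_self_of_prime hπ,
    emultiplicity_eq_zero.mpr hu, emultiplicity_eq_zero.mpr hv, add_zero, Nat.cast_le]
  by_contra! hBA
  obtain ⟨t, rfl⟩ : ∃ t, A = B + t + 1 := ⟨A - B - 1, by omega⟩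
  obtain ⟨h, rfl⟩ := pow_dvd_of_mem_span_pderiv (dvd_mul_right _ _) hh
  have hbracket :
      π ^ (B + t + 1 + B + 1) ∣ π * poissonBracket (π ^ (B + t + 1) * u) (π ^ B * v) := by
    rw [← heq]
    exact ⟨π ^ t * u * h, by ring⟩
  have hab : d * B ≠ e * (B + t + 1) := by nlinarith
  have hdvd : ∀ i, π ∣ pderiv i π := by
    refine Fin.forall_fin_two.mpr ⟨prime_dvd_pderiv_of_pow_dvd hπ hu hv hab 0 ?_,
      prime_dvd_pderiv_of_pow_dvd hπ hu hv hab 1 ?_⟩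
    · rw [← neg_neg (_ - _), ← X_one_mul_poissonBracket hf hg, mul_neg, dvd_neg, mul_left_comm]
      exact hbracket.mul_left _
    · rw [← X_zero_mul_poissonBracket hf hg, mul_left_comm]
      exact hbracket.mul_left _
  obtain ⟨i, hi⟩ := exists_not_dvd_pderiv_of_prime hπ
  exact hi (hdvd i)

theorem mem_range_poissonBracket_of_mul_mem (hd : 1 ≤ d) (hf : f.IsHomogeneous d)
    (hh : h ∈ Ideal.span {pderiv 0 f, pderiv 1 f})
    (H : f * h ∈ LinearMap.range (poissonBracket f)) :
    h ∈ LinearMap.range (poissonBracket f) := by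
  rcases eq_or_ne f 0 with rfl | hf0
  · simp only [map_zero, Set.mem_singleton_iff, Set.insert_eq_of_mem,
      Submodule.span_zero_singleton, Submodule.mem_bot] at hh
    simp [hh]
  obtain ⟨g, hg⟩ := H
  rw [← sum_homogeneousComponent h]
  refine Submodule.sum_mem _ fun m _ => ?_
  by_cases h0 : homogeneousComponent m h = 0
  · rw [h0]
    exact zero_mem _
  obtain ⟨hdm, hmem⟩ := homogeneousComponent_mem_span_pderiv hf hh m h0
  have hcomp :
      f * homogeneousComponent m h = poissonBracket f (homogeneousComponent (m + 2) g) := by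
    have := congr(homogeneousComponent (m + d) $hg)
    rwa [homogeneousComponent_poissonBracket hd hf, homogeneousComponent_mul_of_isHomogeneous hf,
      if_pos (by omega), Nat.add_sub_cancel, eq_comm] at this
  obtain ⟨w, hw⟩ := dvd_of_mul_eq_poissonBracket hd (by omega) hf
    (homogeneousComponent_isHomogeneous _ _) hf0 hmem hcomp
  exact ⟨w, mul_left_cancel₀ hf0 (by rw [← poissonBracket_self_mul, ← hw, hcomp])⟩

theorem mem_range_poissonBracket_of_pow_mul_mem (hd : 1 ≤ d) (hf : f.IsHomogeneous d)
    (hh : h ∈ Ideal.span {pderiv 0 f, pderiv 1 f}) (k : ℕ)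
    (H : f ^ k * h ∈ LinearMap.range (poissonBracket f)) :
    h ∈ LinearMap.range (poissonBracket f) := by
  induction k generalizing h with
  | zero => simpa using H
  | succ k ih =>
    refine mem_range_poissonBracket_of_mul_mem hd hf hh (ih (Ideal.mul_mem_left _ f hh) ?_)
    rwa [pow_succ, mul_assoc] at H

end TorsionFree

end MvPolynomial

theorem dmem_iff_mem_range_poissonBracket (f w : MvPolynomial (Fin 2) ℂ) :
    Dmem f w ↔ w ∈ LinearMap.range (poissonBracket f) := by
  simp only [Dmem, LinearMap.mem_range, poissonBracket_apply, eq_comm]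

theorem statement7_general (f : MvPolynomial (Fin 2) ℂ) (d : ℕ) (hd : 1 < d)
    (hf : f.IsHomogeneous d) :
    ∀ h ∈ Ideal.span ({pderiv 0 f, pderiv 1 f} : Set (MvPolynomial (Fin 2) ℂ)),
      ∀ k : ℕ, 1 ≤ k → Dmem f (f ^ k * h) → Dmem f h := by
  intro h hh k _ hD
  rw [dmem_iff_mem_range_poissonBracket] at hD ⊢
  exact mem_range_poissonBracket_of_pow_mul_mem hd.le hf hh k hD

/-- For `f ∈ ℂ[x,y]` primitive homogeneous of degree `d > 1`
(not a proper power `g^r`, `r > 1`), the module `C(f) = J_f/D_f` is torsion free over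
`ℂ[t]` (with `t` acting by multiplication by `f`). -/
theorem statement7 (f : MvPolynomial (Fin 2) ℂ) (d : ℕ) (hd : 1 < d)
    (hf : f.IsHomogeneous d)
    (hprim : ¬ ∃ (g : MvPolynomial (Fin 2) ℂ) (r : ℕ), 1 < r ∧ f = g ^ r) :
    ∀ h ∈ Ideal.span ({pderiv 0 f, pderiv 1 f} : Set (MvPolynomial (Fin 2) ℂ)),
      ∀ k : ℕ, 1 ≤ k → Dmem f (f ^ k * h) → Dmem f h :=
  statement7_general f d hd hf
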